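/- Let r ≥ 5 and 1 ≤ h ≤ r−4 be integers. On the set Fin (r+h+1) ⊕ Fin (r−h−2) (2r−1 points), define involutions ρ₀,…,ρ_{r−1} by: ρ₀ := (inl h, inl (h+1)); for 1 ≤ l ≤ h, ρ_l := (inl (h−l), inl (h−l+1))·(inl (h+l), inl (h+l+1)); ρ_{h+1} := (inl (2h+1), inl (2h+2)) · ∏_{j=0}^{r−h−3} (inl (2h+3+j), inr j); ρ_{h+2} := (inl (2h+2), inl (2h+3)); and for h+3 ≤ l ≤ r−1, ρ_l := (inl (h+l), inl (h+l+1))·(inr (l−h−3), inr (l−h−2)); where (p, q) denotes the transposition Equiv.swap p q and inl, inr are the inclusions into the sum type. Then the intersection property fails for this family: ⟨ρ₁,…,ρ_{h+2}⟩ ∩ ⟨ρ₀,…,ρ_{h+1}⟩ ≠ ⟨ρ₁,…,ρ_{h+1}⟩. In particular, this permutation representation graph (graph (X) of Cameron–Fernandes–Leemans, Table 6) is not a CPR graph. -/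

import Mathlib

/-!
Let `t` be the transposition `(inl (2h+1), inl (2h+2))`. Conjugating `ρ₀` successively by
`ρ₁, …, ρ_h` yields `(inl 0, inl (2h+1))`, which `ρ_{h+1}` moves to `(inl 0, inl (2h+2))`;
together these generate `t`, so `t ∈ ⟨ρ₀, …, ρ_{h+1}⟩`. Conjugating `ρ_{h+2}` by `ρ_{h+1}` and then
by `ρ_h` gives `(inr 0, inl (2h+1))` and `(inr 0, inl (2h))`, hence `(inl (2h), inl (2h+1))`, and
conjugating this by `ρ_{h+1}` shows `t ∈ ⟨ρ₁, …, ρ_{h+2}⟩`.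

On the other hand `ρ₁, …, ρ_h` lie in the group `N` of even permutations fixing every point
`inr j` and `ρ_{h+1} (inr j)`. The involution `ρ_{h+1}` normalises `N`, so
`⟨ρ₁, …, ρ_{h+1}⟩ ⊆ N ∪ ρ_{h+1} N`. But `t` is odd, and `ρ_{h+1} t` moves `inr 0`.
-/

open Equiv Sum Subgroup

namespace Equiv

variable {α : Type*} [DecidableEq α] {H : Subgroup (Perm α)}

theorem swap_apply_apply_mem {g : Perm α} {a b : α} (hg : g ∈ H) (hab : swap a b ∈ H) :
    swap (g a) (g b) ∈ H := by
  rw [swap_apply_apply]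
  exact H.mul_mem (H.mul_mem hg hab) (H.inv_mem hg)

theorem swap_mem_of_swap_mem_of_swap_mem {a b c : α} (hab : swap a b ∈ H) (hac : swap a c ∈ H) :
    swap b c ∈ H := by
  by_cases hca : c = a
  · rwa [hca, swap_comm]
  by_cases hcb : c = b
  · rw [hcb, swap_self]
    exact H.one_mem
  simpa [swap_apply_of_ne_of_ne hca hcb] using swap_apply_apply_mem hab hac

theorem swap_mem_of_swap_mem_of_apply_eq {g : Perm α} {a b c : α} (hg : g ∈ H)
    (hab : swap a b ∈ H) (ha : g a = a) (hb : g b = c) : swap b c ∈ H :=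
  swap_mem_of_swap_mem_of_swap_mem hab (ha ▸ hb ▸ swap_apply_apply_mem hg hab)

theorem swap_mem_of_forall_lt_exists_apply {x y : ℕ → α} {n : ℕ} (h0 : swap (x 0) (y 0) ∈ H)
    (hstep : ∀ k < n, ∃ g ∈ H, g (x k) = x (k + 1) ∧ g (y k) = y (k + 1)) :
    swap (x n) (y n) ∈ H := by
  induction n with
  | zero => exact h0
  | succ n ih =>
    obtain ⟨g, hg, hx, hy⟩ := hstep n n.lt_succ_self
    rw [← hx, ← hy]
    exact swap_apply_apply_mem hg (ih fun k hk => hstep k (by omega))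

end Equiv

theorem Subgroup.mem_or_mul_mem_of_mem_closure_insert {G : Type*} [Group G] {N : Subgroup G}
    {σ g : G} (hσ : σ * σ = 1) (hN : ∀ n ∈ N, σ * n * σ ∈ N)
    (hg : g ∈ closure (insert σ (N : Set G))) : g ∈ N ∨ σ * g ∈ N := by
  have hσσ (x : G) : σ * (σ * x) = x := by rw [← mul_assoc, hσ, one_mul]
  induction hg using closure_induction with
  | mem x hx =>
    rcases hx with rfl | hx
    · exact .inr (hσ ▸ N.one_mem)
    · exact .inl hx
  | one => exact .inl N.one_mem
  | mul x y _ _ hx hy =>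
    rcases hx with hx | hx <;> rcases hy with hy | hy
    · exact .inl (N.mul_mem hx hy)
    · exact .inr (by simpa [mul_assoc, hσσ] using N.mul_mem (hN x hx) hy)
    · exact .inr (by simpa [mul_assoc] using N.mul_mem hx hy)
    · exact .inl (by simpa [mul_assoc, hσσ] using N.mul_mem (hN _ hx) hy)
  | inv x _ hx =>
    rcases hx with hx | hx
    · exact .inl (N.inv_mem hx)
    · exact .inr (by simpa [mul_assoc, hσσ] using hN _ (N.inv_mem hx))

theorem Equiv.Perm.mul_mul_mem_alternatingGroup_inf_fixingSubgroup {α : Type*} [Fintype α]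
    [DecidableEq α] {T : Set α} {σ n : Perm α} (hσ : σ * σ = 1) (hT : Set.MapsTo σ T T)
    (hn : n ∈ alternatingGroup α ⊓ fixingSubgroup (Perm α) T) :
    σ * n * σ ∈ alternatingGroup α ⊓ fixingSubgroup (Perm α) T := by
  rw [mem_inf, mem_alternatingGroup, mem_fixingSubgroup_iff] at hn ⊢
  refine ⟨by rw [map_mul, map_mul, hn.1, mul_one, ← map_mul, hσ, map_one], fun y hy => ?_⟩
  rw [Perm.smul_def, Perm.mul_apply, Perm.mul_apply, ← Perm.smul_def n, hn.2 _ (hT hy),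
    ← Perm.mul_apply, hσ, Perm.one_apply]

theorem Equiv.Perm.swap_notMem_closure {α : Type*} [Fintype α] [DecidableEq α]
    {S : Set (Perm α)} {σ : Perm α} {T : Set α} {a b x : α} (hσ : σ * σ = 1)
    (hT : Set.MapsTo σ T T)
    (hS : ∀ g ∈ S, g = σ ∨ g ∈ alternatingGroup α ⊓ fixingSubgroup (Perm α) T) (hab : a ≠ b)
    (hx : x ∈ T) (hxa : x ≠ a) (hxb : x ≠ b) (hσx : σ x ≠ x) : swap a b ∉ closure S := by
  intro hmem
  have hle : closure S ≤ closure (insert σ ↑(alternatingGroup α ⊓ fixingSubgroup (Perm α) T)) :=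
    closure_mono fun g hg => hS g hg
  rcases mem_or_mul_mem_of_mem_closure_insert hσ
    (fun n => mul_mul_mem_alternatingGroup_inf_fixingSubgroup hσ hT) (hle hmem) with h | h
  · simp [sign_swap hab] at h
  · have := ((mem_fixingSubgroup_iff _).mp (mem_inf.mp h).2) x hx
    rw [Perm.smul_def, Perm.mul_apply, swap_apply_of_ne_of_ne hxa hxb] at this
    exact hσx this

theorem Subgroup.closure_image_inf_ne_of_mem {G ι : Type*} [Group G] {ρ : ι → G} {I J K : Set ι}
    {t : G} (hIJ : I ∩ J = K) (hI : t ∈ closure (ρ '' I)) (hJ : t ∈ closure (ρ '' J))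
    (hK : t ∉ closure (ρ '' K)) :
    closure (ρ '' I) ⊓ closure (ρ '' J) ≠ closure (ρ '' K) ∧
      ¬ ∀ I J : Set ι, closure (ρ '' I) ⊓ closure (ρ '' J) = closure (ρ '' (I ∩ J)) := by
  have hne : closure (ρ '' I) ⊓ closure (ρ '' J) ≠ closure (ρ '' K) :=
    fun h => hK (h ▸ mem_inf.mpr ⟨hI, hJ⟩)
  exact ⟨hne, fun h => hne (hIJ ▸ h I J)⟩

/-- The generators `ρ₀, …, ρ_{h+2}` of graph (X) of Cameron–Fernandes–Leemans. -/
structure IsGraphX {r h : ℕ} (hr : h + 4 ≤ r)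
    (ρ : Fin r → Perm (Fin (r + h + 1) ⊕ Fin (r - h - 2))) : Prop where
  zero_eq : ρ ⟨0, by omega⟩ = swap (inl ⟨h, by omega⟩) (inl ⟨h + 1, by omega⟩)
  eq_of_le : ∀ (l : ℕ) (hl : l < r), 1 ≤ l → l ≤ h →
    ρ ⟨l, hl⟩ = swap (inl ⟨h - l, by omega⟩) (inl ⟨h - l + 1, by omega⟩) *
      swap (inl ⟨h + l, by omega⟩) (inl ⟨h + l + 1, by omega⟩)
  succ_apply_inl_two_mul_add_one :
    ρ ⟨h + 1, by omega⟩ (inl ⟨2 * h + 1, by omega⟩) = inl ⟨2 * h + 2, by omega⟩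
  succ_apply_inl_add_three : ∀ j : Fin (r - h - 2),
    ρ ⟨h + 1, by omega⟩ (inl ⟨2 * h + 3 + (j : ℕ), by omega⟩) = inr j
  succ_apply_inr : ∀ j : Fin (r - h - 2),
    ρ ⟨h + 1, by omega⟩ (inr j) = inl ⟨2 * h + 3 + (j : ℕ), by omega⟩
  succ_apply_inl_of_le : ∀ m : Fin (r + h + 1), (m : ℕ) ≤ 2 * h →
    ρ ⟨h + 1, by omega⟩ (inl m) = inl m
  succ_mul_self : ρ ⟨h + 1, by omega⟩ * ρ ⟨h + 1, by omega⟩ = 1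
  succ_succ_eq :
    ρ ⟨h + 2, by omega⟩ = swap (inl ⟨2 * h + 2, by omega⟩) (inl ⟨2 * h + 3, by omega⟩)

namespace IsGraphX

variable {r h : ℕ} {hr : h + 4 ≤ r} {ρ : Fin r → Perm (Fin (r + h + 1) ⊕ Fin (r - h - 2))}

theorem succ_apply_inl_two_mul_add_two (hX : IsGraphX hr ρ) :
    ρ ⟨h + 1, by omega⟩ (inl ⟨2 * h + 2, by omega⟩) = inl ⟨2 * h + 1, by omega⟩ := by
  rw [← hX.succ_apply_inl_two_mul_add_one, ← Perm.mul_apply, hX.succ_mul_self, Perm.one_apply]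

theorem swap_mem_closure_upper (hX : IsGraphX hr ρ) (h1 : 1 ≤ h) :
    swap (inl ⟨2 * h + 1, by omega⟩) (inl ⟨2 * h + 2, by omega⟩) ∈
      closure (ρ '' {l : Fin r | 1 ≤ (l : ℕ) ∧ (l : ℕ) ≤ h + 2}) := by
  set A := closure (ρ '' {l : Fin r | 1 ≤ (l : ℕ) ∧ (l : ℕ) ≤ h + 2})
  have hσA : ρ ⟨h + 1, by omega⟩ ∈ A := subset_closure (Set.mem_image_of_mem _ (by simp))
  have hτA : ρ ⟨h, by omega⟩ ∈ A := subset_closure (Set.mem_image_of_mem _ (by simp; omega))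
  have hπA : swap (inl ⟨2 * h + 3, by omega⟩) (inl ⟨2 * h + 2, by omega⟩) ∈ A := by
    rw [swap_comm, ← hX.succ_succ_eq]
    exact subset_closure (Set.mem_image_of_mem _ (by simp))
  have heb : swap (inr ⟨0, by omega⟩) (inl ⟨2 * h + 1, by omega⟩) ∈ A :=
    hX.succ_apply_inl_two_mul_add_two ▸ (hX.succ_apply_inl_add_three ⟨0, by omega⟩) ▸
      swap_apply_apply_mem hσA hπA
  have hea : swap (inr ⟨0, by omega⟩) (inl ⟨2 * h, by omega⟩) ∈ A := by
    convert swap_apply_apply_mem hτA heb using 2 <;> rw [hX.eq_of_le _ _ h1 le_rfl] <;>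
      simp [swap_apply_def, Fin.ext_iff, ite_eq_iff, eq_ite_iff]
    omega
  exact swap_mem_of_swap_mem_of_apply_eq hσA (swap_mem_of_swap_mem_of_swap_mem hea heb)
    (hX.succ_apply_inl_of_le _ le_rfl) hX.succ_apply_inl_two_mul_add_one

theorem swap_mem_closure_lower (hX : IsGraphX hr ρ) :
    swap (inl ⟨2 * h + 1, by omega⟩) (inl ⟨2 * h + 2, by omega⟩) ∈
      closure (ρ '' {l : Fin r | (l : ℕ) ≤ h + 1}) := by
  set B := closure (ρ '' {l : Fin r | (l : ℕ) ≤ h + 1})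
  have hσB : ρ ⟨h + 1, by omega⟩ ∈ B := subset_closure (Set.mem_image_of_mem _ (by simp))
  have h0 : swap (inl ⟨0, by omega⟩) (inl ⟨2 * h + 1, by omega⟩) ∈ B := by
    have hρ₀ : ρ ⟨0, by omega⟩ ∈ B := subset_closure (Set.mem_image_of_mem _ (by simp))
    -- `2h+1-(h-k)` rather than `h+k+1`, so that the point exists for every `k`.
    have := swap_mem_of_forall_lt_exists_apply (H := B) (n := h)
      (x := fun k => inl ⟨h - k, by omega⟩) (y := fun k => inl ⟨2 * h + 1 - (h - k), by omega⟩)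
      (by convert hX.zero_eq ▸ hρ₀ using 4 <;> omega) fun k hk => ?_
    · simpa using this
    refine ⟨ρ ⟨k + 1, by omega⟩, subset_closure (Set.mem_image_of_mem _ (by simp; omega)),
      ?_, ?_⟩ <;> rw [hX.eq_of_le _ _ (by simp) (by omega)] <;>
      simp [swap_apply_def, Fin.ext_iff, ite_eq_iff] <;> omega
  exact swap_mem_of_swap_mem_of_apply_eq hσB h0 (hX.succ_apply_inl_of_le _ (by simp))
    hX.succ_apply_inl_two_mul_add_one

theorem swap_notMem_closure_middle (hX : IsGraphX hr ρ) :
    swap (inl ⟨2 * h + 1, by omega⟩) (inl ⟨2 * h + 2, by omega⟩) ∉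
      closure (ρ '' {l : Fin r | 1 ≤ (l : ℕ) ∧ (l : ℕ) ≤ h + 1}) := by
  set σ := ρ ⟨h + 1, by omega⟩
  refine Perm.swap_notMem_closure hX.succ_mul_self (T := Set.range inr ∪ σ '' Set.range inr)
    (x := inr ⟨0, by omega⟩) ?_ ?_ (by simp [Fin.ext_iff]) (by simp) (by simp) (by simp)
    (by rw [hX.succ_apply_inr]; simp)
  · rintro _ (⟨j, rfl⟩ | ⟨_, ⟨j, rfl⟩, rfl⟩)
    · exact .inr ⟨_, ⟨j, rfl⟩, rfl⟩
    · exact .inl ⟨j, by rw [← Perm.mul_apply, hX.succ_mul_self, Perm.one_apply]⟩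
  · rintro _ ⟨⟨l, hlr⟩, ⟨hl1, hl2⟩, rfl⟩
    rcases Nat.lt_or_ge h l with hl | hl
    · exact .inl (congrArg ρ (Fin.ext (show l = h + 1 by simp at hl2; omega)))
    refine .inr (mem_inf.2 ⟨?_, (mem_fixingSubgroup_iff _).2 ?_⟩) <;>
      rw [hX.eq_of_le l hlr hl1 hl]
    · exact Perm.mul_mem_alternatingGroup_of_isSwap (Perm.swap_isSwap_iff.2 (by simp))
        (Perm.swap_isSwap_iff.2 (by simp))
    · rintro _ (⟨j, rfl⟩ | ⟨_, ⟨j, rfl⟩, rfl⟩)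
      · simp [swap_apply_def]
      · rw [hX.succ_apply_inr]
        simp [swap_apply_def, Fin.ext_iff, ite_eq_iff]
        omega

end IsGraphX

/-- Proposition "counterexample2": graph (X) of Cameron–Fernandes–Leemans (Table 6) is not
a CPR graph; the intersection property fails:
`⟨ρ₁,…,ρ_{h+2}⟩ ⊓ ⟨ρ₀,…,ρ_{h+1}⟩ ≠ ⟨ρ₁,…,ρ_{h+1}⟩`. -/
theorem graph_X_is_not_CPR
    (r h : ℕ) (hr : 5 ≤ r) (h1 : 1 ≤ h) (h2 : h ≤ r - 4)
    (ρ : Fin r → Equiv.Perm (Fin (r + h + 1) ⊕ Fin (r - h - 2)))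
    (hzero : ∀ l : Fin r, (l : ℕ) = 0 →
      ρ l = Equiv.swap (inl ⟨h, by omega⟩) (inl ⟨h + 1, by omega⟩))
    (hmid : ∀ l : Fin r, ∀ hl : 1 ≤ (l : ℕ) ∧ (l : ℕ) ≤ h,
      ρ l = Equiv.swap (inl ⟨h - (l : ℕ), by omega⟩) (inl ⟨h - (l : ℕ) + 1, by omega⟩) *
        Equiv.swap (inl ⟨h + (l : ℕ), by omega⟩) (inl ⟨h + (l : ℕ) + 1, by omega⟩))
    -- `ρ_{h+1}` is the product of the transposition `(2h+1, 2h+2)` (inside the first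
    -- summand) with the pairwise disjoint transpositions `(inl (2h+3+j), inr j)`,
    -- described here pointwise:
    (hsplit : ∀ l : Fin r, (l : ℕ) = h + 1 →
      (ρ l (inl ⟨2 * h + 1, by omega⟩) = inl ⟨2 * h + 2, by omega⟩) ∧
      (∀ j : Fin (r - h - 2),
        ρ l (inl ⟨2 * h + 3 + (j : ℕ), by omega⟩) = inr j ∧
        ρ l (inr j) = inl ⟨2 * h + 3 + (j : ℕ), by omega⟩) ∧
      (∀ m : Fin (r + h + 1), (m : ℕ) ≤ 2 * h → ρ l (inl m) = inl m) ∧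
      (ρ l * ρ l = 1))
    (hsplit2 : ∀ l : Fin r, (l : ℕ) = h + 2 →
      ρ l = Equiv.swap (inl ⟨2 * h + 2, by omega⟩) (inl ⟨2 * h + 3, by omega⟩)) :
    Subgroup.closure (ρ '' {l : Fin r | 1 ≤ (l : ℕ) ∧ (l : ℕ) ≤ h + 2}) ⊓
        Subgroup.closure (ρ '' {l : Fin r | (l : ℕ) ≤ h + 1}) ≠
      Subgroup.closure (ρ '' {l : Fin r | 1 ≤ (l : ℕ) ∧ (l : ℕ) ≤ h + 1}) ∧
    ¬ (∀ I J : Set (Fin r),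
      Subgroup.closure (ρ '' I) ⊓ Subgroup.closure (ρ '' J) =
        Subgroup.closure (ρ '' (I ∩ J))) := by
  obtain ⟨hσ, hσtail, hσfix, hσσ⟩ := hsplit ⟨h + 1, by omega⟩ rfl
  have hX : IsGraphX (by omega : h + 4 ≤ r) ρ :=
    ⟨hzero _ rfl, fun l hl hl1 hl2 => hmid ⟨l, hl⟩ ⟨hl1, hl2⟩, hσ, fun j => (hσtail j).1,
      fun j => (hσtail j).2, hσfix, hσσ, hsplit2 _ rfl⟩
  exact closure_image_inf_ne_of_mem (by ext; simp; omega) (hX.swap_mem_closure_upper h1)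
    hX.swap_mem_closure_lower hX.swap_notMem_closure_middle
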